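/- arXiv:1205.5321 — 5 statements merged into one kernel-verified Lean document; each statement's English description precedes it below -/
import Mathlib

section
/- Define w(z) = z[f^+(z), f^-(z)] and s^±(z) = z[f^-(z^{±1}), f^+(z^{∓1})], where f^± are the Jost solutions. Then w(z) w(z^{-1}) + (z − z^{-1})² = s^±(z) s^±(z^{-1}) for all z ∈ ℂ∖{0}. -/
/-!
The four Jost solutions `f⁺(z), f⁻(z), f⁺(z⁻¹), f⁻(z⁻¹)` all solve the Jacobi equation with the
same spectral parameter `z + z⁻¹`, so their modified Wronskians are independent of `n`.
Evaluating near `±∞`, where the solutions are pure powers of `z`, gives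
`[f⁺(z), f⁺(z⁻¹)] = z⁻¹ - z` and `[f⁻(z), f⁻(z⁻¹)] = z - z⁻¹`; the Plücker identity
`[f₁,f₂][f₃,f₄] + [f₁,f₄][f₂,f₃] = [f₁,f₃][f₂,f₄]` then yields the claim.
-/

/-- The modified Wronskian `[f,g]ₙ = aₙ (f(n) g(n+1) − f(n+1) g(n))`. -/
def modWron (a : ℤ → ℝ) (f g : ℤ → ℂ) (n : ℤ) : ℂ :=
  (a n : ℂ) * (f n * g (n + 1) - f (n + 1) * g n)

def IsJacobiSolution (a b : ℤ → ℝ) (lam : ℂ) (f : ℤ → ℂ) : Prop :=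
  ∀ n : ℤ, (a (n - 1) : ℂ) * f (n - 1) + (a n : ℂ) * f (n + 1) + (b n : ℂ) * f n = lam * f n

namespace modWron

variable {a b : ℤ → ℝ} {f g : ℤ → ℂ}

theorem swap (a : ℤ → ℝ) (f g : ℤ → ℂ) (n : ℤ) : modWron a g f n = -modWron a f g n := by
  simp only [modWron]; ring

theorem plucker (a : ℤ → ℝ) (f₁ f₂ f₃ f₄ : ℤ → ℂ) (n : ℤ) :
    modWron a f₁ f₂ n * modWron a f₃ f₄ n + modWron a f₁ f₄ n * modWron a f₂ f₃ n =
      modWron a f₁ f₃ n * modWron a f₂ f₄ n := by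
  simp only [modWron]; ring

theorem succ_eq {lam : ℂ} (hf : IsJacobiSolution a b lam f) (hg : IsJacobiSolution a b lam g)
    (n : ℤ) : modWron a f g (n + 1) = modWron a f g n := by
  have hf1 := hf (n + 1)
  have hg1 := hg (n + 1)
  simp only [add_sub_cancel_right] at hf1 hg1
  simp only [modWron]
  linear_combination f (n + 1) * hg1 - g (n + 1) * hf1

theorem eq_of_isJacobiSolution {lam : ℂ} (hf : IsJacobiSolution a b lam f)
    (hg : IsJacobiSolution a b lam g) (n m : ℤ) : modWron a f g n = modWron a f g m := by
  have hper : Function.Periodic (modWron a f g) 1 := succ_eq hf hg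
  simpa using (hper.int_mul_eq n).trans (hper.int_mul_eq m).symm

theorem eq_inv_sub_of_eq_zpow {z : ℂ} (hz : z ≠ 0) {N : ℤ} (ha : a N = 1)
    (hfN : f N = z ^ N) (hfN' : f (N + 1) = z ^ (N + 1))
    (hgN : g N = z⁻¹ ^ N) (hgN' : g (N + 1) = z⁻¹ ^ (N + 1)) :
    modWron a f g N = z⁻¹ - z := by
  rw [modWron, ha, hfN, hfN', hgN, hgN', inv_zpow', inv_zpow', zpow_neg, zpow_neg,
    zpow_add_one₀ hz]
  push_cast
  field_simp

end modWron

theorem w_s_identity_general (a b : ℤ → ℝ) (Nm Np : ℤ)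
    (hasupp : ∀ n, n < Nm ∨ Np ≤ n → a n = 1)
    (fp fm : ℂ → ℤ → ℂ)
    (hfp : ∀ z : ℂ, z ≠ 0 → ∀ n : ℤ,
      (a (n - 1) : ℂ) * fp z (n - 1) + (a n : ℂ) * fp z (n + 1) + (b n : ℂ) * fp z n
        = (z + z⁻¹) * fp z n)
    (hfpbc : ∀ z : ℂ, z ≠ 0 → ∀ n : ℤ, Np ≤ n → fp z n = z ^ n)
    (hfm : ∀ z : ℂ, z ≠ 0 → ∀ n : ℤ,
      (a (n - 1) : ℂ) * fm z (n - 1) + (a n : ℂ) * fm z (n + 1) + (b n : ℂ) * fm z n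
        = (z + z⁻¹) * fm z n)
    (hfmbc : ∀ z : ℂ, z ≠ 0 → ∀ n : ℤ, n ≤ Nm → fm z n = z ^ (-n)) :
    ∀ z : ℂ, z ≠ 0 → ∀ n : ℤ,
      (z * modWron a (fp z) (fm z) n) * (z⁻¹ * modWron a (fp z⁻¹) (fm z⁻¹) n)
          + (z - z⁻¹) ^ 2
        = (z * modWron a (fm z⁻¹) (fp z) n) * (z⁻¹ * modWron a (fm z) (fp z⁻¹) n) ∧
      (z * modWron a (fp z) (fm z) n) * (z⁻¹ * modWron a (fp z⁻¹) (fm z⁻¹) n)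
          + (z - z⁻¹) ^ 2
        = (z * modWron a (fm z) (fp z⁻¹) n) * (z⁻¹ * modWron a (fm z⁻¹) (fp z) n) := by
  intro z hz n
  have hz' : z⁻¹ ≠ 0 := inv_ne_zero hz
  have hspec : z⁻¹ + z⁻¹⁻¹ = z + z⁻¹ := by rw [inv_inv, add_comm]
  have hfp' := hfp z⁻¹ hz'
  have hfm' := hfm z⁻¹ hz'
  rw [hspec] at hfp' hfm'
  have hfm_pow : ∀ m ≤ Nm, fm z⁻¹ m = z ^ m := fun m hm => by
    rw [hfmbc z⁻¹ hz' m hm, inv_zpow', neg_neg]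
  have hfm_pow' : ∀ m ≤ Nm, fm z m = z⁻¹ ^ m := fun m hm => by
    rw [hfmbc z hz m hm, inv_zpow']
  have hWp : modWron a (fp z) (fp z⁻¹) n = z⁻¹ - z :=
    (modWron.eq_of_isJacobiSolution (hfp z hz) hfp' n Np).trans <|
      modWron.eq_inv_sub_of_eq_zpow hz (hasupp Np (.inr le_rfl)) (hfpbc z hz _ le_rfl)
        (hfpbc z hz _ (by omega)) (hfpbc z⁻¹ hz' _ le_rfl) (hfpbc z⁻¹ hz' _ (by omega))
  have hWm : modWron a (fm z⁻¹) (fm z) n = z⁻¹ - z :=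
    (modWron.eq_of_isJacobiSolution hfm' (hfm z hz) n (Nm - 1)).trans <|
      modWron.eq_inv_sub_of_eq_zpow hz (hasupp _ (.inl (by omega))) (hfm_pow _ (by omega))
        (hfm_pow _ (by omega)) (hfm_pow' _ (by omega)) (hfm_pow' _ (by omega))
  have hpl := modWron.plucker a (fp z) (fm z) (fp z⁻¹) (fm z⁻¹) n
  rw [hWp, modWron.swap a (fm z⁻¹) (fm z), hWm] at hpl
  rw [modWron.swap a (fp z) (fm z⁻¹)]
  constructor <;> linear_combination z * z⁻¹ * hpl - (z - z⁻¹) ^ 2 * mul_inv_cancel₀ hz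

/-- With `w(z) = z[f⁺(z), f⁻(z)]` and `s^±(z) = z[f⁻(z^{±1}), f⁺(z^{∓1})]`, one has
`w(z) w(z⁻¹) + (z − z⁻¹)² = s^±(z) s^±(z⁻¹)`. -/
theorem w_s_identity (a b : ℤ → ℝ) (Nm Np : ℤ)
    (ha : ∀ n, 0 < a n)
    (hasupp : ∀ n, n < Nm ∨ Np ≤ n → a n = 1)
    (hbsupp : ∀ n, n < Nm ∨ Np < n → b n = 0)
    (fp fm : ℂ → ℤ → ℂ)
    (hfp : ∀ z : ℂ, z ≠ 0 → ∀ n : ℤ,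
      (a (n - 1) : ℂ) * fp z (n - 1) + (a n : ℂ) * fp z (n + 1) + (b n : ℂ) * fp z n
        = (z + z⁻¹) * fp z n)
    (hfpbc : ∀ z : ℂ, z ≠ 0 → ∀ n : ℤ, Np ≤ n → fp z n = z ^ n)
    (hfm : ∀ z : ℂ, z ≠ 0 → ∀ n : ℤ,
      (a (n - 1) : ℂ) * fm z (n - 1) + (a n : ℂ) * fm z (n + 1) + (b n : ℂ) * fm z n
        = (z + z⁻¹) * fm z n)
    (hfmbc : ∀ z : ℂ, z ≠ 0 → ∀ n : ℤ, n ≤ Nm → fm z n = z ^ (-n)) :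
    ∀ z : ℂ, z ≠ 0 → ∀ n : ℤ,
      (z * modWron a (fp z) (fm z) n) * (z⁻¹ * modWron a (fp z⁻¹) (fm z⁻¹) n)
          + (z - z⁻¹) ^ 2
        = (z * modWron a (fm z⁻¹) (fp z) n) * (z⁻¹ * modWron a (fm z) (fp z⁻¹) n) ∧
      (z * modWron a (fp z) (fm z) n) * (z⁻¹ * modWron a (fp z⁻¹) (fm z⁻¹) n)
          + (z - z⁻¹) ^ 2
        = (z * modWron a (fm z) (fp z⁻¹) n) * (z⁻¹ * modWron a (fm z⁻¹) (fp z) n) :=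
  w_s_identity_general a b Nm Np hasupp fp fm hfp hfpbc hfm hfmbc
end

section
/- The function w(z) = z[f^+(z), f^-(z)] extends to a polynomial in z with real coefficients of degree at most max{2, 2(N^+ − N^-)}, and w(0) = A^{-1} where A = ∏_{m=N^-}^{N^+−1} a_m. -/
open Polynomial

/-- Auxiliary pair of polynomials `(g (Nm+k-1), g (Nm+k))` extending `z ↦ z ^ n * fm z n`. -/
noncomputable def jostPoly (a b : ℤ → ℝ) (Nm : ℤ) : ℕ → Polynomial ℝ × Polynomial ℝ
  | 0 => (1, 1)
  | k + 1 =>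
      let pq := jostPoly a b Nm k
      (pq.2, C (a (Nm + k))⁻¹ *
        ((X ^ 2 + 1) * pq.2 - X ^ 2 * C (a (Nm + k - 1)) * pq.1
          - X * C (b (Nm + k)) * pq.2))

lemma jostPoly_deg (a b : ℤ → ℝ) (Nm : ℤ) (ha1 : a (Nm - 1) = 1) :
    ∀ k : ℕ, (jostPoly a b Nm k).1.natDegree ≤ 2 * k - 3 ∧
      (jostPoly a b Nm k).2.natDegree ≤ 2 * k - 1 := by
  intro k
  induction k with
  | zero => simp [jostPoly]
  | succ k ih =>
    obtain ⟨ih1, ih2⟩ := ih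
    constructor
    · show (jostPoly a b Nm k).2.natDegree ≤ _
      omega
    · match k, ih1, ih2 with
      | 0, ih1, ih2 =>
        have h : (jostPoly a b Nm 1).2 = C (a Nm)⁻¹ * (1 - X * C (b Nm)) := by
          show C (a (Nm + (0:ℕ)))⁻¹ * _ = _
          have e1 : (Nm + (0:ℕ) - 1 : ℤ) = Nm - 1 := by push_cast; ring
          have e2 : (Nm + (0:ℕ) : ℤ) = Nm := by push_cast; ring
          rw [e1, e2, ha1]
          show _ * ((X ^ 2 + 1) * 1 - X ^ 2 * C 1 * 1 - X * C (b Nm) * 1) = _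
          rw [map_one]
          ring
        rw [h]
        refine le_trans (natDegree_mul_le) ?_
        have : (1 - X * C (b Nm) : Polynomial ℝ).natDegree ≤ 1 := by
          refine le_trans (natDegree_sub_le _ _) ?_
          simp [natDegree_mul_le]
          exact le_trans (natDegree_mul_le) (by simp)
        simp only [natDegree_C]
        omega
      | (k+1), ih1, ih2 =>
        set p := (jostPoly a b Nm (k+1)).1 with hp
        set q := (jostPoly a b Nm (k+1)).2 with hq
        show (C (a (Nm + (k+1:ℕ)))⁻¹ *
          ((X ^ 2 + 1) * q - X ^ 2 * C (a (Nm + (k+1:ℕ) - 1)) * p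
            - X * C (b (Nm + (k+1:ℕ))) * q)).natDegree ≤ _
        refine le_trans (natDegree_mul_le) ?_
        have h1 : ((X ^ 2 + 1 : Polynomial ℝ) * q).natDegree ≤ 2 + q.natDegree :=
          le_trans natDegree_mul_le (by
            have : (X ^ 2 + 1 : Polynomial ℝ).natDegree ≤ 2 := by
              refine le_trans (natDegree_add_le _ _) (by simp)
            omega)
        have h2 : (X ^ 2 * C (a (Nm + (k+1:ℕ) - 1)) * p).natDegree ≤ 2 + p.natDegree :=
          le_trans natDegree_mul_le (by
            have : (X ^ 2 * C (a (Nm + (k+1:ℕ) - 1)) : Polynomial ℝ).natDegree ≤ 2 :=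
              le_trans natDegree_mul_le (by simp)
            omega)
        have h3 : (X * C (b (Nm + (k+1:ℕ))) * q).natDegree ≤ 1 + q.natDegree :=
          le_trans natDegree_mul_le (by
            have : (X * C (b (Nm + (k+1:ℕ))) : Polynomial ℝ).natDegree ≤ 1 :=
              le_trans natDegree_mul_le (by simp)
            omega)
        have h4 := natDegree_sub_le ((X ^ 2 + 1) * q - X ^ 2 * C (a (Nm + (k+1:ℕ) - 1)) * p)
          (X * C (b (Nm + (k+1:ℕ))) * q)
        have h5 := natDegree_sub_le ((X ^ 2 + 1) * q) (X ^ 2 * C (a (Nm + (k+1:ℕ) - 1)) * p)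
        simp only [natDegree_C]
        omega

lemma jostPoly_eval_zero (a b : ℤ → ℝ) (Nm : ℤ) :
    ∀ k : ℕ, (jostPoly a b Nm k).2.eval 0 = (∏ i ∈ Finset.range k, a (Nm + i))⁻¹ := by
  intro k
  induction k with
  | zero => simp [jostPoly]
  | succ k ih =>
    show (C (a (Nm + (k:ℕ)))⁻¹ *
        ((X ^ 2 + 1) * (jostPoly a b Nm k).2 - X ^ 2 * C (a (Nm + (k:ℕ) - 1)) * (jostPoly a b Nm k).1
          - X * C (b (Nm + (k:ℕ))) * (jostPoly a b Nm k).2)).eval 0 = _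
    rw [Finset.prod_range_succ]
    simp only [eval_mul, eval_sub, eval_add, eval_pow, eval_X, eval_C, eval_one, ih]
    rw [mul_inv]
    ring

lemma jostPoly_eval (a b : ℤ → ℝ) (Nm : ℤ) (f : ℤ → ℂ) (z : ℂ) (hz : z ≠ 0)
    (ha : ∀ n, a n ≠ 0)
    (hrec : ∀ n : ℤ,
      (a (n - 1) : ℂ) * f (n - 1) + (a n : ℂ) * f (n + 1) + (b n : ℂ) * f n
        = (z + z⁻¹) * f n)
    (h0 : f Nm = z ^ (-Nm)) (h1 : f (Nm - 1) = z ^ (-(Nm - 1))) :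
    ∀ k : ℕ, aeval z (jostPoly a b Nm k).1 = z ^ (Nm + (k:ℤ) - 1) * f (Nm + (k:ℤ) - 1) ∧
      aeval z (jostPoly a b Nm k).2 = z ^ (Nm + (k:ℤ)) * f (Nm + (k:ℤ)) := by
  intro k
  induction k with
  | zero =>
    constructor
    · show aeval z (1 : Polynomial ℝ) = _
      rw [map_one]
      have : (Nm + ((0:ℕ):ℤ) - 1) = Nm - 1 := by push_cast; ring
      rw [this, h1, ← zpow_add₀ hz]
      simp
    · show aeval z (1 : Polynomial ℝ) = _
      rw [map_one]
      have : (Nm + ((0:ℕ):ℤ)) = Nm := by push_cast; ring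
      rw [this, h0, ← zpow_add₀ hz]
      simp
  | succ k ih =>
    obtain ⟨ih1, ih2⟩ := ih
    have e1 : (Nm + ((k:ℕ)+1:ℕ) - 1 : ℤ) = Nm + (k:ℤ) := by push_cast; ring
    have e2 : (Nm + ((k:ℕ)+1:ℕ) : ℤ) = Nm + (k:ℤ) + 1 := by push_cast; ring
    constructor
    · show aeval z (jostPoly a b Nm k).2 = _
      rw [e1]; exact ih2
    · show aeval z (C (a (Nm + (k:ℕ)))⁻¹ *
        ((X ^ 2 + 1) * (jostPoly a b Nm k).2 - X ^ 2 * C (a (Nm + (k:ℕ) - 1)) * (jostPoly a b Nm k).1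
          - X * C (b (Nm + (k:ℕ))) * (jostPoly a b Nm k).2)) = _
      rw [e2]
      set n := Nm + (k:ℤ) with hn
      have h := hrec n
      have hne : (a n : ℂ) ≠ 0 := by exact_mod_cast ha n
      have hzz : z * z⁻¹ = 1 := mul_inv_cancel₀ hz
      have hz1 : z ^ (n + 1) = z ^ n * z := zpow_add_one₀ hz n
      have hzm1 : z ^ (n - 1) = z ^ n * z⁻¹ := by
        rw [zpow_sub_one₀ hz]
      simp only [map_mul, map_sub, map_add, map_pow, aeval_X, aeval_C, map_one,
        algebraMap_eq, Complex.coe_algebraMap]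
      rw [ih1, ih2, hz1, hzm1]
      have key : (a n : ℂ) * (z ^ n * z * f (n + 1)) =
          (z ^ 2 + 1) * (z ^ n * f n) - z ^ 2 * (a (n - 1) : ℂ) * (z ^ n * z⁻¹ * f (n - 1))
            - z * (b n : ℂ) * (z ^ n * f n) := by
        have h2 : (a n : ℂ) * f (n + 1)
            = (z + z⁻¹) * f n - (a (n - 1) : ℂ) * f (n - 1) - (b n : ℂ) * f n := by
          linear_combination h
        calc (a n : ℂ) * (z ^ n * z * f (n + 1)) = z ^ n * z * ((a n : ℂ) * f (n + 1)) := by ring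
        _ = z ^ n * z * ((z + z⁻¹) * f n - (a (n - 1) : ℂ) * f (n - 1) - (b n : ℂ) * f n) := by
            rw [h2]
        _ = _ := by linear_combination (z ^ n * f n + z * (a (n-1):ℂ) * z ^ n * f (n-1)) * hzz
      rw [Complex.ofReal_inv, inv_mul_eq_iff_eq_mul₀ hne]
      linear_combination -key

lemma const_of_step {W : ℤ → ℂ} (h : ∀ n, W n = W (n + 1)) (m n : ℤ) : W m = W n := by
  have key : ∀ k : ℕ, ∀ m : ℤ, W m = W (m + k) := by
    intro k
    induction k with
    | zero => simp
    | succ k ih =>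
      intro m
      rw [ih m, h (m + k)]
      congr 1
      push_cast
      ring
  rcases le_total m n with hle | hle
  · rw [show n = m + ((n - m).toNat : ℤ) by omega]
    exact key _ m
  · rw [show m = n + ((m - n).toNat : ℤ) by omega]
    exact (key _ n).symm

lemma prod_Ico_eq_range (a : ℤ → ℝ) (Nm : ℤ) :
    ∀ k : ℕ, ∏ m ∈ Finset.Ico Nm (Nm + (k:ℤ)), a m = ∏ i ∈ Finset.range k, a (Nm + i) := by
  intro k
  induction k with
  | zero => simp
  | succ k ih =>
    have hins : Finset.Ico Nm (Nm + (k:ℤ) + 1) = insert (Nm + (k:ℤ)) (Finset.Ico Nm (Nm + (k:ℤ))) := by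
      ext x
      simp only [Finset.mem_Ico, Finset.mem_insert]
      omega
    rw [Finset.prod_range_succ, ← ih,
      show (Nm + ((k:ℕ)+1:ℕ) : ℤ) = (Nm + (k:ℤ)) + 1 by push_cast; ring,
      hins, Finset.prod_insert (by simp)]
    exact mul_comm _ _

/-- The function `w(z) = z[f⁺(z), f⁻(z)]` extends to a polynomial with real coefficients of
degree at most `max{2, 2(N⁺ − N⁻)}`, and `w(0) = A⁻¹` where `A = ∏_{m=N⁻}^{N⁺−1} aₘ`. -/
theorem w_is_real_polynomial (a b : ℤ → ℝ) (Nm Np : ℤ) (hNN : Nm ≤ Np)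
    (ha : ∀ n, 0 < a n)
    (hasupp : ∀ n, n < Nm ∨ Np ≤ n → a n = 1)
    (hbsupp : ∀ n, n < Nm ∨ Np < n → b n = 0)
    (fp fm : ℂ → ℤ → ℂ)
    (hfp : ∀ z : ℂ, z ≠ 0 → ∀ n : ℤ,
      (a (n - 1) : ℂ) * fp z (n - 1) + (a n : ℂ) * fp z (n + 1) + (b n : ℂ) * fp z n
        = (z + z⁻¹) * fp z n)
    (hfpbc : ∀ z : ℂ, z ≠ 0 → ∀ n : ℤ, Np ≤ n → fp z n = z ^ n)
    (hfm : ∀ z : ℂ, z ≠ 0 → ∀ n : ℤ,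
      (a (n - 1) : ℂ) * fm z (n - 1) + (a n : ℂ) * fm z (n + 1) + (b n : ℂ) * fm z n
        = (z + z⁻¹) * fm z n)
    (hfmbc : ∀ z : ℂ, z ≠ 0 → ∀ n : ℤ, n ≤ Nm → fm z n = z ^ (-n)) :
    ∃ p : Polynomial ℝ,
      p.degree ≤ (max 2 (2 * (Np - Nm)).toNat : ℕ) ∧
      (p.map (algebraMap ℝ ℂ)).eval 0 = ((∏ m ∈ Finset.Ico Nm Np, a m : ℝ) : ℂ)⁻¹ ∧
      ∀ z : ℂ, z ≠ 0 → ∀ n : ℤ,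
        z * modWron a (fp z) (fm z) n = (p.map (algebraMap ℝ ℂ)).eval z := by
  set D := (Np - Nm).toNat with hDdef
  have hD : (D : ℤ) = Np - Nm := Int.toNat_of_nonneg (by omega)
  have ha1 : a (Nm - 1) = 1 := hasupp _ (Or.inl (by omega))
  have haN : a Np = 1 := hasupp _ (Or.inr le_rfl)
  have hane : ∀ n, a n ≠ 0 := fun n => ne_of_gt (ha n)
  refine ⟨(jostPoly a b Nm D).2 - X ^ 2 * C (a (Np - 1)) * (jostPoly a b Nm D).1
      - X * C (b Np) * (jostPoly a b Nm D).2, ?_, ?_, ?_⟩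
  · -- degree bound
    obtain ⟨d1, d2⟩ := jostPoly_deg a b Nm ha1 D
    rw [← natDegree_le_iff_degree_le]
    have h2 : (X ^ 2 * C (a (Np - 1)) * (jostPoly a b Nm D).1).natDegree
        ≤ 2 + (jostPoly a b Nm D).1.natDegree :=
      le_trans natDegree_mul_le (by
        have : (X ^ 2 * C (a (Np - 1)) : Polynomial ℝ).natDegree ≤ 2 :=
          le_trans natDegree_mul_le (by simp)
        omega)
    have h3 : (X * C (b Np) * (jostPoly a b Nm D).2).natDegree
        ≤ 1 + (jostPoly a b Nm D).2.natDegree :=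
      le_trans natDegree_mul_le (by
        have : (X * C (b Np) : Polynomial ℝ).natDegree ≤ 1 :=
          le_trans natDegree_mul_le (by simp)
        omega)
    have h4 := natDegree_sub_le
      ((jostPoly a b Nm D).2 - X ^ 2 * C (a (Np - 1)) * (jostPoly a b Nm D).1)
      (X * C (b Np) * (jostPoly a b Nm D).2)
    have h5 := natDegree_sub_le (jostPoly a b Nm D).2
      (X ^ 2 * C (a (Np - 1)) * (jostPoly a b Nm D).1)
    have hT : (2 * (Np - Nm)).toNat = 2 * D := by omega
    rw [hT]
    omega
  · -- value at zero
    rw [eval_map, eval₂_at_zero]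
    have hv : ((jostPoly a b Nm D).2 - X ^ 2 * C (a (Np - 1)) * (jostPoly a b Nm D).1
        - X * C (b Np) * (jostPoly a b Nm D).2).coeff 0
        = (∏ m ∈ Finset.Ico Nm Np, a m)⁻¹ := by
      rw [coeff_zero_eq_eval_zero]
      simp only [eval_sub, eval_mul, eval_pow, eval_X, eval_C]
      rw [jostPoly_eval_zero a b Nm D, ← prod_Ico_eq_range a Nm D,
        show Nm + (D:ℤ) = Np by omega]
      ring
    rw [hv]
    simp [Complex.ofReal_inv]
  · -- the evaluation identity
    intro z hz n
    have hzz : z * z⁻¹ = 1 := mul_inv_cancel₀ hz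
    obtain ⟨E1, E2⟩ := jostPoly_eval a b Nm (fm z) z hz hane (hfm z hz)
      (hfmbc z hz Nm le_rfl) (hfmbc z hz (Nm - 1) (by omega)) D
    rw [show (Nm + (D:ℤ) - 1) = Np - 1 by omega] at E1
    rw [show (Nm + (D:ℤ)) = Np by omega] at E2
    -- Wronskian is constant in n
    have hstep : ∀ m : ℤ, modWron a (fp z) (fm z) m = modWron a (fp z) (fm z) (m + 1) := by
      intro m
      have hf1 := hfp z hz (m + 1)
      have hg1 := hfm z hz (m + 1)
      simp only [add_sub_cancel_right] at hf1 hg1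
      unfold modWron
      linear_combination (fm z (m + 1)) * hf1 - (fp z (m + 1)) * hg1
    rw [const_of_step hstep n Np]
    -- evaluate the Wronskian at Np
    unfold modWron
    rw [hfpbc z hz Np le_rfl, hfpbc z hz (Np + 1) (by omega), haN]
    -- evaluate the polynomial
    rw [eval_map, ← aeval_def]
    simp only [map_sub, map_mul, map_pow, aeval_X, aeval_C, Complex.coe_algebraMap]
    rw [E1, E2]
    have h := hfm z hz Np
    rw [haN] at h
    push_cast at h
    rw [zpow_add_one₀ hz Np, zpow_sub_one₀ hz Np]
    push_cast
    linear_combination (z * z ^ Np) * h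
      + (z ^ Np * fm z Np + (a (Np - 1) : ℂ) * z ^ Np * z * fm z (Np - 1)) * hzz
end

section
/- The function z ↦ z^{−2N^-} s^-(z) is a polynomial with real coefficients of degree at most 2(N^+ − N^-) + 1, and lim_{z→0} z^{−2N^-−1} s^-(z) = b_{N^-}/A. -/
open Polynomial

/-- Auxiliary polynomial sequence for the Jost solution `f⁻`. -/
noncomputable def jostQ (a b : ℤ → ℝ) (Nm : ℤ) : ℕ → Polynomial ℝ
  | 0 => 1
  | 1 => X ^ 2 - C (b Nm) * X
  | (k + 2) => (1 - C (b (Nm + k + 1)) * X + X ^ 2) * jostQ a b Nm (k + 1)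
      - C ((a (Nm + k)) ^ 2) * X ^ 2 * jostQ a b Nm k

lemma jostQ_coeff_zero (a b : ℤ → ℝ) (Nm : ℤ) : ∀ k : ℕ, (jostQ a b Nm (k + 1)).coeff 0 = 0 := by
  intro k
  induction k with
  | zero => simp [jostQ]
  | succ k ih =>
    simp [jostQ, Polynomial.mul_coeff_zero, ih]

lemma jostQ_coeff_one (a b : ℤ → ℝ) (Nm : ℤ) : ∀ k : ℕ, (jostQ a b Nm (k + 1)).coeff 1 = -(b Nm) := by
  intro k
  induction k with
  | zero => simp [jostQ]
  | succ k ih =>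
    have h0 := jostQ_coeff_zero a b Nm k
    have key : (jostQ a b Nm (k + 2)).coeff 1
        = (jostQ a b Nm (k+1)).coeff 1
          - b (Nm+k+1) * (jostQ a b Nm (k+1)).coeff 0
          + ((X:ℝ[X]) * (X * jostQ a b Nm (k+1))).coeff 1
          - ((C ((a (Nm+k))^2) : ℝ[X]) * (X * (X * jostQ a b Nm k))).coeff 1 := by
      show ((1 - C (b (Nm + k + 1)) * X + X ^ 2) * jostQ a b Nm (k + 1)
          - C ((a (Nm + k)) ^ 2) * X ^ 2 * jostQ a b Nm k).coeff 1 = _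
      rw [show (1 - C (b (Nm + k + 1)) * X + X ^ 2) * jostQ a b Nm (k + 1)
          = jostQ a b Nm (k+1) - C (b (Nm+k+1)) * (X * jostQ a b Nm (k+1))
            + X * (X * jostQ a b Nm (k+1)) by ring,
        show (C ((a (Nm + k)) ^ 2) : ℝ[X]) * X ^ 2 * jostQ a b Nm k
          = C ((a (Nm+k))^2) * (X * (X * jostQ a b Nm k)) by ring]
      rw [Polynomial.coeff_sub, Polynomial.coeff_add, Polynomial.coeff_sub,
        Polynomial.coeff_C_mul]
      rw [show (1:ℕ) = 0 + 1 from rfl, Polynomial.coeff_X_mul]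
    rw [key, ih, h0]
    have t1 : ∀ q : ℝ[X], ((X:ℝ[X]) * (X * q)).coeff 1 = 0 := by
      intro q
      have := Polynomial.coeff_X_mul ((X:ℝ[X]) * q) 0
      simpa [Polynomial.mul_coeff_zero] using this
    simp [Polynomial.coeff_C_mul, t1, pow_two, mul_assoc]

lemma jostQ_degree (a b : ℤ → ℝ) (Nm : ℤ) : ∀ k : ℕ, (jostQ a b Nm k).degree ≤ 2 * k := by
  intro k
  induction k using Nat.strong_induction_on with
  | _ k ih =>
    match k with
    | 0 => simp [jostQ]
    | 1 =>
      refine le_trans (Polynomial.degree_sub_le _ _) ?_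
      simp only [Polynomial.degree_X_pow]
      refine max_le (by norm_num) (le_trans (Polynomial.degree_mul_le _ _) ?_)
      refine le_trans (add_le_add Polynomial.degree_C_le Polynomial.degree_X_le) ?_
      norm_num
    | (k + 2) =>
      have ih1 := ih (k + 1) (by omega)
      have ih0 := ih k (by omega)
      refine le_trans (Polynomial.degree_sub_le _ _) (max_le ?_ ?_)
      · refine le_trans (Polynomial.degree_mul_le _ _) ?_
        have h1 : (1 - C (b (Nm + k + 1)) * X + X ^ 2 : ℝ[X]).degree ≤ 2 := by
          refine le_trans (Polynomial.degree_add_le _ _) (max_le ?_ (by simp))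
          refine le_trans (Polynomial.degree_sub_le _ _) (max_le (by norm_num) ?_)
          refine le_trans (Polynomial.degree_mul_le _ _) ?_
          refine le_trans (add_le_add Polynomial.degree_C_le Polynomial.degree_X_le) ?_
          norm_num
        calc (1 - C (b (Nm + k + 1)) * X + X ^ 2 : ℝ[X]).degree + (jostQ a b Nm (k+1)).degree
            ≤ 2 + (2 * (k+1) : ℕ) := add_le_add h1 ih1
          _ ≤ (2 * (k + 2) : ℕ) := by
              rw [show ((2 : WithBot ℕ)) = ((2 : ℕ) : WithBot ℕ) by rfl, ← Nat.cast_add]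
              exact_mod_cast by omega
      · refine le_trans (Polynomial.degree_mul_le _ _) ?_
        have h1 : (C ((a (Nm + k)) ^ 2) * X ^ 2 : ℝ[X]).degree ≤ 2 := by
          refine le_trans (Polynomial.degree_mul_le _ _) ?_
          refine le_trans (add_le_add Polynomial.degree_C_le le_rfl) ?_
          simp
        calc (C ((a (Nm + k)) ^ 2) * X ^ 2 : ℝ[X]).degree + (jostQ a b Nm k).degree
            ≤ 2 + (2 * k : ℕ) := add_le_add h1 ih0
          _ ≤ (2 * (k + 2) : ℕ) := by
              rw [show ((2 : WithBot ℕ)) = ((2 : ℕ) : WithBot ℕ) by rfl, ← Nat.cast_add]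
              exact_mod_cast by omega

lemma jostQ_coeff_top (a b : ℤ → ℝ) (Nm : ℤ) : ∀ k : ℕ, (jostQ a b Nm k).coeff (2 * k) = 1 := by
  intro k
  induction k using Nat.strong_induction_on with
  | _ k ih =>
    match k with
    | 0 => simp [jostQ]
    | 1 => simp [jostQ]
    | (k + 2) =>
      have ih1 := ih (k + 1) (by omega)
      have d1 := jostQ_degree a b Nm (k + 1)
      have d0 := jostQ_degree a b Nm k
      have z1 : (jostQ a b Nm (k+1)).coeff (2*k+3) = 0 :=
        Polynomial.coeff_eq_zero_of_degree_lt (lt_of_le_of_lt d1 (by exact_mod_cast by omega))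
      have z2 : (jostQ a b Nm (k+1)).coeff (2*k+4) = 0 :=
        Polynomial.coeff_eq_zero_of_degree_lt (lt_of_le_of_lt d1 (by exact_mod_cast by omega))
      have z0 : (jostQ a b Nm k).coeff (2*k+2) = 0 :=
        Polynomial.coeff_eq_zero_of_degree_lt (lt_of_le_of_lt d0 (by exact_mod_cast by omega))
      have e1 : ((X:ℝ[X]) ^ 2 * jostQ a b Nm (k+1)).coeff (2*k+4) = (jostQ a b Nm (k+1)).coeff (2*k+2) := by
        have := Polynomial.coeff_X_pow_mul (jostQ a b Nm (k+1)) 2 (2*k+2)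
        simpa [show 2*k+2+2 = 2*k+4 by omega] using this
      have e2 : ((C (b (Nm+k+1)) : ℝ[X]) * X * jostQ a b Nm (k+1)).coeff (2*k+4)
          = b (Nm+k+1) * (jostQ a b Nm (k+1)).coeff (2*k+3) := by
        rw [mul_assoc, Polynomial.coeff_C_mul]
        have := Polynomial.coeff_X_pow_mul (jostQ a b Nm (k+1)) 1 (2*k+3)
        simpa [show 2*k+3+1 = 2*k+4 by omega] using this
      have e3 : ((C ((a (Nm+k))^2) : ℝ[X]) * X ^ 2 * jostQ a b Nm k).coeff (2*k+4)
          = (a (Nm+k))^2 * (jostQ a b Nm k).coeff (2*k+2) := by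
        rw [mul_assoc, Polynomial.coeff_C_mul]
        have := Polynomial.coeff_X_pow_mul (jostQ a b Nm k) 2 (2*k+2)
        simpa [show 2*k+2+2 = 2*k+4 by omega] using this
      have : (jostQ a b Nm (k+2)).coeff (2*(k+2))
          = (jostQ a b Nm (k+1)).coeff (2*k+4)
            - b (Nm+k+1) * (jostQ a b Nm (k+1)).coeff (2*k+3)
            + (jostQ a b Nm (k+1)).coeff (2*k+2)
            - (a (Nm+k))^2 * (jostQ a b Nm k).coeff (2*k+2) := by
        show ((1 - C (b (Nm + k + 1)) * X + X ^ 2) * jostQ a b Nm (k + 1)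
          - C ((a (Nm + k)) ^ 2) * X ^ 2 * jostQ a b Nm k).coeff (2*(k+2)) = _
        rw [show 2*(k+2) = 2*k+4 from by omega, Polynomial.coeff_sub, e3]
        rw [show (1 - C (b (Nm + k + 1)) * X + X ^ 2) * jostQ a b Nm (k + 1)
          = jostQ a b Nm (k+1) - C (b (Nm+k+1)) * X * jostQ a b Nm (k+1)
            + X ^ 2 * jostQ a b Nm (k+1) by ring]
        rw [Polynomial.coeff_add, Polynomial.coeff_sub, e1, e2]
      rw [this, z1, z2, z0]
      simpa [show 2*(k+1) = 2*k+2 by omega] using ih1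

lemma jost_formula (a b : ℤ → ℝ) (Nm : ℤ)
    (hasupp : ∀ n, n < Nm → a n = 1)
    (u : ℤ → ℂ) (z : ℂ) (hz : z ≠ 0)
    (hu : ∀ n : ℤ, (a (n-1) : ℂ) * u (n-1) + (a n : ℂ) * u (n+1) + (b n : ℂ) * u n
      = (z + z⁻¹) * u n)
    (hbc : ∀ n ≤ Nm, u n = z ^ n) :
    ∀ k : ℕ, (∏ i ∈ Finset.range k, (a (Nm + i) : ℂ)) * u (Nm + (k:ℤ))
      = z ^ (Nm - (k:ℤ)) * (Polynomial.aeval z (jostQ a b Nm k)) := by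
  have hstep : ∀ k : ℕ,
      ((∏ i ∈ Finset.range k, (a (Nm + i) : ℂ)) * u (Nm + (k:ℤ))
        = z ^ (Nm - (k:ℤ)) * (Polynomial.aeval z (jostQ a b Nm k))) →
      ((∏ i ∈ Finset.range (k+1), (a (Nm + i) : ℂ)) * u (Nm + (k:ℤ) + 1)
        = z ^ (Nm - (k:ℤ) - 1) * (Polynomial.aeval z (jostQ a b Nm (k+1)))) →
      ((∏ i ∈ Finset.range (k+2), (a (Nm + i) : ℂ)) * u (Nm + (k:ℤ) + 2)
        = z ^ (Nm - (k:ℤ) - 2) * (Polynomial.aeval z (jostQ a b Nm (k+2)))) := by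
    intro k Sk Sk1
    rw [show jostQ a b Nm (k+2) = (1 - C (b (Nm + k + 1)) * X + X ^ 2) * jostQ a b Nm (k + 1)
      - C ((a (Nm + k)) ^ 2) * X ^ 2 * jostQ a b Nm k from rfl]
    simp only [map_sub, map_add, map_mul, map_one, map_pow, aeval_X, aeval_C,
      Complex.coe_algebraMap]
    rw [Finset.prod_range_succ, Finset.prod_range_succ,
      show (Nm + ((k+1:ℕ):ℤ)) = Nm + (k:ℤ) + 1 from by push_cast; ring]
    rw [Finset.prod_range_succ] at Sk1
    have hrec := hu (Nm + (k:ℤ) + 1)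
    rw [show Nm + (k:ℤ) + 1 - 1 = Nm + (k:ℤ) by ring,
      show Nm + (k:ℤ) + 1 + 1 = Nm + (k:ℤ) + 2 by ring] at hrec
    have e0 : z ^ (Nm - (k:ℤ)) = z ^ (Nm - (k:ℤ) - 2) * z * z := by
      rw [← zpow_add_one₀ hz, ← zpow_add_one₀ hz]; ring_nf
    have e1 : z ^ (Nm - (k:ℤ) - 1) = z ^ (Nm - (k:ℤ) - 2) * z := by
      rw [← zpow_add_one₀ hz]; ring_nf
    rw [e0] at Sk
    rw [e1] at Sk1
    linear_combination (∏ i ∈ Finset.range k, (a (Nm + i) : ℂ)) * (a (Nm + (k:ℤ)) : ℂ) * hrec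
      - ((a (Nm + (k:ℤ)) : ℂ))^2 * Sk
      + (z + z⁻¹ - (b (Nm + (k:ℤ) + 1) : ℂ)) * Sk1
      + z ^ (Nm - (k:ℤ) - 2) * (Polynomial.aeval z (jostQ a b Nm (k+1))) * (mul_inv_cancel₀ hz)
  have s0 : (∏ i ∈ Finset.range 0, (a (Nm + i) : ℂ)) * u (Nm + ((0:ℕ):ℤ))
      = z ^ (Nm - ((0:ℕ):ℤ)) * (Polynomial.aeval z (jostQ a b Nm 0)) := by
    rw [show jostQ a b Nm 0 = 1 from rfl]
    simp [hbc Nm le_rfl]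
  have s1 : (∏ i ∈ Finset.range 1, (a (Nm + i) : ℂ)) * u (Nm + ((0:ℕ):ℤ) + 1)
      = z ^ (Nm - ((0:ℕ):ℤ) - 1) * (Polynomial.aeval z (jostQ a b Nm 1)) := by
    rw [show jostQ a b Nm 1 = X ^ 2 - C (b Nm) * X from rfl]
    simp only [map_sub, map_add, map_mul, map_one, map_pow, aeval_X, aeval_C,
      Complex.coe_algebraMap]
    simp only [Finset.prod_range_one, Nat.cast_zero, add_zero, sub_zero]
    have hrec := hu Nm
    rw [hasupp (Nm - 1) (by omega), hbc (Nm - 1) (by omega), hbc Nm le_rfl] at hrec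
    have e0 : z ^ Nm = z ^ (Nm - 1) * z := by
      rw [← zpow_add_one₀ hz]; ring_nf
    rw [e0] at hrec
    push_cast at hrec
    linear_combination hrec + z ^ (Nm - 1) * (mul_inv_cancel₀ hz)
  have main : ∀ k : ℕ,
      ((∏ i ∈ Finset.range k, (a (Nm + i) : ℂ)) * u (Nm + (k:ℤ))
        = z ^ (Nm - (k:ℤ)) * (Polynomial.aeval z (jostQ a b Nm k))) ∧
      ((∏ i ∈ Finset.range (k+1), (a (Nm + i) : ℂ)) * u (Nm + (k:ℤ) + 1)
        = z ^ (Nm - (k:ℤ) - 1) * (Polynomial.aeval z (jostQ a b Nm (k+1)))) := by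
    intro k
    induction k with
    | zero => exact ⟨s0, s1⟩
    | succ k ih =>
      have ck : ((k+1:ℕ):ℤ) = (k:ℤ) + 1 := by push_cast; ring
      constructor
      · rw [ck, show Nm + ((k:ℤ) + 1) = Nm + (k:ℤ) + 1 by ring,
          show Nm - ((k:ℤ) + 1) = Nm - (k:ℤ) - 1 by ring]
        exact ih.2
      · rw [ck, show Nm + ((k:ℤ) + 1) + 1 = Nm + (k:ℤ) + 2 by ring,
          show Nm - ((k:ℤ) + 1) - 1 = Nm - (k:ℤ) - 2 by ring]
        exact hstep k ih.1 ih.2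
  exact fun k => (main k).1

lemma prod_range_eq_Ico (f : ℤ → ℝ) (N : ℤ) :
    ∀ k : ℕ, ∏ i ∈ Finset.range k, f (N + (i:ℤ)) = ∏ m ∈ Finset.Ico N (N + (k:ℤ)), f m := by
  intro k
  induction k with
  | zero => simp
  | succ k ih =>
    have h1 : Finset.Ico N (N + ((k+1:ℕ):ℤ)) = insert (N + (k:ℤ)) (Finset.Ico N (N + (k:ℤ))) := by
      ext m
      simp only [Finset.mem_Ico, Finset.mem_insert]
      omega
    rw [Finset.prod_range_succ, h1, Finset.prod_insert (by simp), ih]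
    ring
/-- The function `z ↦ z^{−2N⁻} s⁻(z)`, where `s⁻(z) = z[f⁻(z⁻¹), f⁺(z)]`, is a polynomial
with real coefficients of degree at most `2(N⁺ − N⁻) + 1`, and
`lim_{z→0} z^{−2N⁻−1} s⁻(z) = b_{N⁻}/A`. -/
theorem s_minus_polynomial_and_limit (a b : ℤ → ℝ) (Nm Np : ℤ) (hNN : Nm ≤ Np)
    (ha : ∀ n, 0 < a n)
    (hasupp : ∀ n, n < Nm ∨ Np ≤ n → a n = 1)
    (hbsupp : ∀ n, n < Nm ∨ Np < n → b n = 0)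
    (fp fm : ℂ → ℤ → ℂ)
    (hfp : ∀ z : ℂ, z ≠ 0 → ∀ n : ℤ,
      (a (n - 1) : ℂ) * fp z (n - 1) + (a n : ℂ) * fp z (n + 1) + (b n : ℂ) * fp z n
        = (z + z⁻¹) * fp z n)
    (hfpbc : ∀ z : ℂ, z ≠ 0 → ∀ n : ℤ, Np ≤ n → fp z n = z ^ n)
    (hfm : ∀ z : ℂ, z ≠ 0 → ∀ n : ℤ,
      (a (n - 1) : ℂ) * fm z (n - 1) + (a n : ℂ) * fm z (n + 1) + (b n : ℂ) * fm z n
        = (z + z⁻¹) * fm z n)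
    (hfmbc : ∀ z : ℂ, z ≠ 0 → ∀ n : ℤ, n ≤ Nm → fm z n = z ^ (-n)) :
    ∃ p : Polynomial ℝ,
      p.degree ≤ ((2 * (Np - Nm) + 1).toNat : ℕ) ∧
      (∀ z : ℂ, z ≠ 0 → ∀ n : ℤ,
        z ^ (-(2 * Nm)) * (z * modWron a (fm z⁻¹) (fp z) n)
          = (p.map (algebraMap ℝ ℂ)).eval z) ∧
      Filter.Tendsto
        (fun z : ℂ => z ^ (-(2 * Nm) - 1) * (z * modWron a (fm z⁻¹) (fp z) 0))
        (nhdsWithin 0 {(0 : ℂ)}ᶜ)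
        (nhds (((b Nm / ∏ m ∈ Finset.Ico Nm Np, a m : ℝ) : ℂ))) := by
  set K : ℕ := (Np - Nm).toNat with hKdef
  have hK : (K : ℤ) = Np - Nm := Int.toNat_of_nonneg (by omega)
  set A : ℝ := ∏ m ∈ Finset.Ico Nm Np, a m with hAdef
  have hApos : 0 < A := Finset.prod_pos (fun m _ => ha m)
  have hA : A ≠ 0 := ne_of_gt hApos
  set r : Polynomial ℝ := X ^ 2 * jostQ a b Nm K - jostQ a b Nm (K + 1) with hrdef
  set p : Polynomial ℝ := C A⁻¹ * r with hpdef
  -- coefficients of r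
  have hr0 : r.coeff 0 = 0 := by
    rw [hrdef, Polynomial.coeff_sub, Polynomial.mul_coeff_zero, jostQ_coeff_zero]
    simp
  have hr1 : r.coeff 1 = b Nm := by
    have t1 : ((X:ℝ[X]) ^ 2 * jostQ a b Nm K).coeff 1 = 0 := by
      rw [show (X:ℝ[X]) ^ 2 * jostQ a b Nm K = X * (X * jostQ a b Nm K) by ring]
      have := Polynomial.coeff_X_mul ((X:ℝ[X]) * jostQ a b Nm K) 0
      simpa [Polynomial.mul_coeff_zero] using this
    rw [hrdef, Polynomial.coeff_sub, t1, jostQ_coeff_one]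
    ring
  -- degree of r
  have hrdeg2 : r.degree ≤ ((2 * K + 2 : ℕ) : WithBot ℕ) := by
    rw [hrdef]
    refine le_trans (Polynomial.degree_sub_le _ _) (max_le ?_ ?_)
    · refine le_trans (Polynomial.degree_mul_le _ _) ?_
      refine le_trans (add_le_add (Polynomial.degree_X_pow_le 2) (jostQ_degree a b Nm K)) ?_
      push_cast
      exact le_of_eq (by ring)
    · refine le_trans (jostQ_degree a b Nm (K+1)) ?_
      push_cast
      exact le_of_eq (by ring)
  have hrtop : r.coeff (2 * K + 2) = 0 := by
    have e1 : ((X:ℝ[X]) ^ 2 * jostQ a b Nm K).coeff (2*K+2) = (jostQ a b Nm K).coeff (2*K) := by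
      have := Polynomial.coeff_X_pow_mul (jostQ a b Nm K) 2 (2*K)
      simpa using this
    rw [hrdef, Polynomial.coeff_sub, e1, jostQ_coeff_top,
      show 2*K+2 = 2*(K+1) from by omega, jostQ_coeff_top]
    ring
  have hrdeg : r.degree ≤ ((2 * K + 1 : ℕ) : WithBot ℕ) := by
    rw [Polynomial.degree_le_iff_coeff_zero]
    intro m hm
    have hm' : 2 * K + 1 < m := by exact_mod_cast hm
    rcases eq_or_lt_of_le (show 2*K+2 ≤ m by omega) with h | h
    · rw [← h]; exact hrtop
    · exact Polynomial.coeff_eq_zero_of_degree_lt (lt_of_le_of_lt hrdeg2 (by exact_mod_cast h))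
  have hpdeg : p.degree ≤ ((2 * (Np - Nm) + 1).toNat : ℕ) := by
    have : ((2 * (Np - Nm) + 1).toNat : ℕ) = 2 * K + 1 := by omega
    rw [this, hpdef]
    refine le_trans (Polynomial.degree_mul_le _ _) ?_
    refine le_trans (add_le_add Polynomial.degree_C_le hrdeg) ?_
    simp
  -- the evaluation identity
  have heval : ∀ z : ℂ, z ≠ 0 → ∀ n : ℤ,
      z ^ (-(2 * Nm)) * (z * modWron a (fm z⁻¹) (fp z) n)
        = (p.map (algebraMap ℝ ℂ)).eval z := by
    intro z hz n
    have hzi : z⁻¹ ≠ 0 := inv_ne_zero hz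
    have hu : ∀ m : ℤ, (a (m-1) : ℂ) * fm z⁻¹ (m-1) + (a m : ℂ) * fm z⁻¹ (m+1)
        + (b m : ℂ) * fm z⁻¹ m = (z + z⁻¹) * fm z⁻¹ m := by
      intro m
      have := hfm z⁻¹ hzi m
      rw [inv_inv] at this
      linear_combination this
    have hv := hfp z hz
    -- Wronskian is constant
    have hstep : ∀ m : ℤ, modWron a (fm z⁻¹) (fp z) m = modWron a (fm z⁻¹) (fp z) (m+1) := by
      intro m
      have hum := hu (m+1)
      have hvm := hv (m+1)
      rw [show (m:ℤ)+1-1 = m by ring] at hum hvm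
      simp only [modWron]
      linear_combination (fp z (m+1)) * hum - (fm z⁻¹ (m+1)) * hvm
    have hup : ∀ n m : ℤ, n ≤ m → modWron a (fm z⁻¹) (fp z) n = modWron a (fm z⁻¹) (fp z) m := by
      intro n m hnm
      obtain ⟨d, rfl⟩ : ∃ d : ℕ, m = n + d := ⟨(m - n).toNat, by omega⟩
      clear hnm
      induction d with
      | zero => simp
      | succ d ih =>
        rw [show n + ((d+1:ℕ):ℤ) = n + (d:ℕ) + 1 from by push_cast; ring, ← hstep (n + (d:ℕ))]
        exact ih
    have hconst : modWron a (fm z⁻¹) (fp z) n = modWron a (fm z⁻¹) (fp z) Np := by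
      rcases le_total n Np with h | h
      · exact hup n Np h
      · exact (hup Np n h).symm
    -- boundary values
    have hbc : ∀ m ≤ Nm, fm z⁻¹ m = z ^ m := by
      intro m hm
      rw [hfmbc z⁻¹ hzi m hm, zpow_neg, inv_zpow, inv_inv]
    have SK := jost_formula a b Nm (fun m hm => hasupp m (Or.inl hm)) (fm z⁻¹) z hz hu hbc K
    have SK1 := jost_formula a b Nm (fun m hm => hasupp m (Or.inl hm)) (fm z⁻¹) z hz hu hbc (K+1)
    -- rewrite products as A
    have hprod : ∀ k : ℕ, (∏ i ∈ Finset.range k, ((a (Nm + (i:ℤ)) : ℝ) : ℂ))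
        = ((∏ m ∈ Finset.Ico Nm (Nm + (k:ℤ)), a m : ℝ) : ℂ) := by
      intro k
      rw [← prod_range_eq_Ico a Nm k]
      push_cast
      rfl
    have hACK : (∏ i ∈ Finset.range K, ((a (Nm + (i:ℤ)) : ℝ) : ℂ)) = (A : ℂ) := by
      rw [hprod K, show Nm + (K:ℤ) = Np by omega, hAdef]
    have hACK1 : (∏ i ∈ Finset.range (K+1), ((a (Nm + (i:ℤ)) : ℝ) : ℂ)) = (A : ℂ) := by
      rw [Finset.prod_range_succ, hACK, show Nm + (K:ℤ) = Np by omega,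
        hasupp Np (Or.inr le_rfl)]
      simp
    rw [hACK] at SK
    rw [hACK1] at SK1
    rw [show Nm + (K:ℤ) = Np by omega] at SK
    rw [show Nm + ((K+1:ℕ):ℤ) = Np + 1 from by push_cast; omega] at SK1
    rw [show Nm - ((K+1:ℕ):ℤ) = Nm - (K:ℤ) - 1 from by push_cast; ring] at SK1
    -- boundary values of fp
    have hvNp : fp z Np = z ^ Np := hfpbc z hz Np le_rfl
    have hvNp1 : fp z (Np + 1) = z ^ (Np + 1) := hfpbc z hz (Np + 1) (by omega)
    -- put everything together
    rw [hconst]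
    simp only [modWron, hvNp, hvNp1, hasupp Np (Or.inr le_rfl)]
    rw [show (p.map (algebraMap ℝ ℂ)).eval z = Polynomial.aeval z p from by
      rw [Polynomial.aeval_def, Polynomial.eval_map]]
    rw [hpdef, hrdef]
    simp only [map_sub, map_mul, map_pow, Polynomial.aeval_X, Polynomial.aeval_C,
      Complex.coe_algebraMap]
    have hAC : (A : ℂ) ≠ 0 := by exact_mod_cast hA
    apply mul_left_cancel₀ hAC
    have E1 : z ^ (-(2 * Nm)) * z ^ (Np + 1) * z ^ (Nm - (K:ℤ)) * z = z * z := by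
      rw [← zpow_add₀ hz, ← zpow_add₀ hz, ← zpow_add_one₀ hz,
        show -(2 * Nm) + (Np + 1) + (Nm - (K:ℤ)) + 1 = 1 + 1 from by omega,
        zpow_add₀ hz, zpow_one]
    have E2 : z ^ (-(2 * Nm)) * z ^ Np * z ^ (Nm - (K:ℤ) - 1) * z = 1 := by
      rw [← zpow_add₀ hz, ← zpow_add₀ hz, ← zpow_add_one₀ hz,
        show -(2 * Nm) + Np + (Nm - (K:ℤ) - 1) + 1 = 0 from by omega,
        zpow_zero]
    have hAinv : (A : ℂ) * ((A:ℝ)⁻¹ : ℂ) = 1 := by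
      push_cast
      exact mul_inv_cancel₀ hAC
    push_cast
    linear_combination (z ^ (-(2 * Nm)) * z * z ^ (Np + 1)) * SK
      - (z ^ (-(2 * Nm)) * z * z ^ Np) * SK1
      + (Polynomial.aeval z (jostQ a b Nm K)) * E1
      - (Polynomial.aeval z (jostQ a b Nm (K+1))) * E2
      - (z^2 * Polynomial.aeval z (jostQ a b Nm K) - Polynomial.aeval z (jostQ a b Nm (K+1))) * hAinv
  refine ⟨p, hpdeg, heval, ?_⟩
  -- the limit
  set pc : Polynomial ℂ := p.map (algebraMap ℝ ℂ) with hpcdef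
  have hp0 : pc.eval 0 = 0 := by
    rw [← Polynomial.coeff_zero_eq_eval_zero, hpcdef, Polynomial.coeff_map, hpdef,
      Polynomial.coeff_C_mul, hr0]
    simp
  have hp1 : pc.coeff 1 = ((b Nm / A : ℝ) : ℂ) := by
    rw [hpcdef, Polynomial.coeff_map, hpdef, Polynomial.coeff_C_mul, hr1,
      Complex.coe_algebraMap]
    push_cast
    rw [div_eq_mul_inv, mul_comm]
  have hderiv : HasDerivAt (fun x : ℂ => pc.eval x) (((b Nm / A : ℝ) : ℂ)) 0 := by
    have h := pc.hasDerivAt (0 : ℂ)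
    have : pc.derivative.eval 0 = ((b Nm / A : ℝ) : ℂ) := by
      rw [← Polynomial.coeff_zero_eq_eval_zero, Polynomial.coeff_derivative, hp1]
      simp
    rwa [this] at h
  rw [hasDerivAt_iff_tendsto_slope] at hderiv
  refine hderiv.congr' ?_
  filter_upwards [self_mem_nhdsWithin] with z hz
  have hz' : z ≠ 0 := hz
  have hev := heval z hz' 0
  rw [slope_def_field, hp0]
  rw [zpow_sub_one₀ hz', mul_comm (z ^ (-(2*Nm))) z⁻¹, mul_assoc, hev]
  rw [sub_zero, sub_zero, div_eq_mul_inv]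
  ring
end

section
/- Under the transfer formula f^+(n,z) = A^+(n)^{-1}(z^n + ∑_{m=n+1}^{2N^+−n−1} K_0^+(n,m) z^m) for the Jost solution, the first kernel coefficient satisfies K_0^+(n, n+1) = −∑_{m=n+1}^{N^+} b_m. -/
/-!
Normalizing `g⁺(n, ·)` as `1 + K₀⁺(n, n+1) z + O(z²)`, the first kernel coefficient is the
derivative of `g⁺(n, ·)` at `0`. Differentiating the three-term recurrence at `z = 0`, where
`g⁺ = 1` and the `z²`-term contributes nothing, gives `K₀⁺(n-1, n) = K₀⁺(n, n+1) - bₙ`; since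
`K₀⁺(n, n+1) = 0` for `n ≥ N⁺`, summing this telescoping relation downwards gives the formula.
-/

open Finset

section FirstCoefficient

variable {𝕜 : Type*} [NontriviallyNormedField 𝕜]

theorem hasDerivAt_sum_mul_pow_zero (s : Finset ℕ) (c : ℕ → 𝕜) :
    HasDerivAt (fun z => ∑ j ∈ s, c j * z ^ j) (if 1 ∈ s then c 1 else 0) 0 := by
  have hterm : ∀ j : ℕ, c j * (j * (0 : 𝕜) ^ (j - 1)) = if j = 1 then c 1 else 0 := by
    rintro (_ | _ | j) <;> simp
  refine (HasDerivAt.fun_sum fun j (_ : j ∈ s) =>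
    (hasDerivAt_pow j (0 : 𝕜)).const_mul (c j)).congr_deriv ?_
  rw [sum_congr rfl fun j _ => hterm j, sum_ite_eq']

theorem hasDerivAt_zero_three_term {G₁ G₂ : 𝕜 → 𝕜} {d₁ d₂ : 𝕜} (α β : 𝕜)
    (h₁ : HasDerivAt G₁ d₁ 0) (h₂ : HasDerivAt G₂ d₂ 0) (hG₁ : G₁ 0 = 1) :
    HasDerivAt (fun z => G₁ z * (1 + z ^ 2 - β * z) - α * z ^ 2 * G₂ z) (d₁ - β) 0 := by
  have hquad : HasDerivAt (fun z : 𝕜 => 1 + z ^ 2 - β * z) (-β) 0 :=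
    (((hasDerivAt_pow 2 0).const_add 1).sub ((hasDerivAt_id 0).const_mul β)).congr_deriv
      (by simp)
  have hsq : HasDerivAt (fun z : 𝕜 => α * z ^ 2) 0 0 :=
    ((hasDerivAt_pow 2 0).const_mul α).congr_deriv (by simp)
  refine ((h₁.mul hquad).sub (hsq.mul h₂)).congr_deriv ?_
  simp [hG₁, sub_eq_add_neg]

end FirstCoefficient

theorem eq_neg_sum_Icc_of_sub_one_eq_sub {M : Type*} [AddCommGroup M] {k b : ℤ → M} {N : ℤ}
    (hk : ∀ n, N ≤ n → k n = 0) (hrec : ∀ n, k (n - 1) = k n - b n) (n : ℤ) :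
    k n = -∑ m ∈ Icc (n + 1) N, b m := by
  rcases le_or_gt n N with hn | hn
  · induction n, hn using Int.leInductionDown with
    | base => simp [hk N le_rfl]
    | pred n hn ih =>
      rw [hrec, ih, sub_add_cancel, ← insert_Icc_add_one_left_eq_Icc hn,
        sum_insert (by simp)]
      abel
  · simp [hk n hn.le, Icc_eq_empty_of_lt (by omega : N < n + 1)]

theorem kernel_first_coefficient_general (a b : ℤ → ℝ) (Np : ℤ)
    (g : ℤ → ℂ → ℂ)
    (hgrec : ∀ n : ℤ, ∀ z : ℂ,
      g (n - 1) z = g n z * (1 + z ^ 2 - (b n : ℂ) * z) - (a n : ℂ) ^ 2 * z ^ 2 * g (n + 1) z)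
    (K₀ : ℤ → ℤ → ℝ)
    (hK₀zero : ∀ n m : ℤ, (m ≤ n ∨ 2 * Np ≤ m + n) → K₀ n m = 0)
    (hK : ∀ n : ℤ, ∀ z : ℂ,
      g n z = 1 + ∑ j ∈ Finset.Icc 1 (2 * (Np - n) - 1).toNat,
        (K₀ n (n + (j : ℤ)) : ℂ) * z ^ j) :
    ∀ n : ℤ, K₀ n (n + 1) = -∑ m ∈ Finset.Icc (n + 1) Np, b m := by
  have hK₀_top : ∀ n, Np ≤ n → K₀ n (n + 1) = 0 := fun n hn => hK₀zero n (n + 1) (by omega)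
  have hg_zero : ∀ n, g n 0 = 1 := fun n => by
    rw [hK n 0, sum_eq_zero fun j hj => by
      rw [zero_pow (Nat.one_le_iff_ne_zero.mp (mem_Icc.mp hj).1), mul_zero], add_zero]
  have hg_deriv : ∀ n, HasDerivAt (g n) (K₀ n (n + 1) : ℂ) 0 := by
    intro n
    rw [funext (hK n)]
    refine ((hasDerivAt_sum_mul_pow_zero _ _).const_add 1).congr_deriv ?_
    by_cases hn : Np ≤ n
    · rw [show (2 * (Np - n) - 1).toNat = 0 by omega, hK₀_top n hn]
      simp
    · rw [if_pos (mem_Icc.mpr ⟨le_rfl, by omega⟩)]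
      simp
  have hrec : ∀ n, K₀ (n - 1) (n - 1 + 1) = K₀ n (n + 1) - b n := by
    intro n
    have h : HasDerivAt (g (n - 1)) ((K₀ n (n + 1) : ℂ) - b n) 0 := by
      rw [funext (hgrec n)]
      exact hasDerivAt_zero_three_term _ _ (hg_deriv n) (hg_deriv (n + 1)) (hg_zero n)
    exact_mod_cast (hg_deriv (n - 1)).unique h
  exact eq_neg_sum_Icc_of_sub_one_eq_sub (k := fun n => K₀ n (n + 1)) hK₀_top hrec

/-- Writing `g⁺(n,z) = 1 + ∑_{j=1}^{2(N⁺−n)−1} K₀⁺(n,n+j) zʲ` for the (normalized) Jost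
solution, the first kernel coefficient satisfies `K₀⁺(n, n+1) = −∑_{m=n+1}^{N⁺} bₘ`. -/
theorem kernel_first_coefficient (a b : ℤ → ℝ) (Nm Np : ℤ)
    (ha : ∀ n, 0 < a n)
    (hasupp : ∀ n, n < Nm ∨ Np ≤ n → a n = 1)
    (hbsupp : ∀ n, n < Nm ∨ Np < n → b n = 0)
    (g : ℤ → ℂ → ℂ)
    (hg1 : ∀ n : ℤ, ∀ z : ℂ, Np ≤ n → g n z = 1)
    (hgrec : ∀ n : ℤ, ∀ z : ℂ,
      g (n - 1) z = g n z * (1 + z ^ 2 - (b n : ℂ) * z) - (a n : ℂ) ^ 2 * z ^ 2 * g (n + 1) z)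
    (K₀ : ℤ → ℤ → ℝ)
    (hK₀zero : ∀ n m : ℤ, (m ≤ n ∨ 2 * Np ≤ m + n) → K₀ n m = 0)
    (hK : ∀ n : ℤ, ∀ z : ℂ,
      g n z = 1 + ∑ j ∈ Finset.Icc 1 (2 * (Np - n) - 1).toNat,
        (K₀ n (n + (j : ℤ)) : ℂ) * z ^ j) :
    ∀ n : ℤ, K₀ n (n + 1) = -∑ m ∈ Finset.Icc (n + 1) Np, b m :=
  kernel_first_coefficient_general a b Np g hgrec K₀ hK₀zero hK
end

section
/- Let z_1,...,z_M be nonzero complex numbers with |z_j| ≥ γ for some γ ∈ (0,1], and similarly z̃_1,...,z̃_{M̃} with |z̃_j| ≥ γ. Suppose |z_j − z̃_j| ≤ ε for 1 ≤ j ≤ m (where m ≤ min(M, M̃)) and |z_j|, |z̃_j| ≥ R for j > m. Then for all |z| ≤ 1: |∏_{j=1}^M (1 − z/z_j) − ∏_{j=1}^{M̃} (1 − z/z̃_j)| ≤ (1+γ^{-1})^{max(M,M̃)−1} (m γ^{-2} ε + (M − m + M̃ − m)/R). -/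
lemma prod_diff_bound (C : ℝ) (hC : 1 ≤ C) (f g : ℕ → ℂ) :
    ∀ N : ℕ, (∀ j ∈ Finset.Icc 1 N, ‖f j‖ ≤ C) → (∀ j ∈ Finset.Icc 1 N, ‖g j‖ ≤ C) →
    ‖(∏ j ∈ Finset.Icc 1 N, f j) - ∏ j ∈ Finset.Icc 1 N, g j‖
      ≤ C ^ (N - 1) * ∑ j ∈ Finset.Icc 1 N, ‖f j - g j‖ := by
  intro N
  induction N with
  | zero => simp
  | succ N ih =>
    intro hf hg
    have hsub : Finset.Icc 1 N ⊆ Finset.Icc 1 (N + 1) :=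
      Finset.Icc_subset_Icc_right (Nat.le_succ N)
    have hnot : N + 1 ∉ Finset.Icc 1 N := by simp
    have hins : Finset.Icc 1 (N + 1) = insert (N + 1) (Finset.Icc 1 N) := by
      ext j; simp [Finset.mem_Icc]; omega
    have hf' := fun j hj => hf j (hsub hj)
    have hg' := fun j hj => hg j (hsub hj)
    have ihN := ih hf' hg'
    have hC0 : (0:ℝ) ≤ C := le_trans zero_le_one hC
    have key : (∏ j ∈ Finset.Icc 1 (N+1), f j) - ∏ j ∈ Finset.Icc 1 (N+1), g j
        = f (N+1) * ((∏ j ∈ Finset.Icc 1 N, f j) - ∏ j ∈ Finset.Icc 1 N, g j)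
          + (f (N+1) - g (N+1)) * ∏ j ∈ Finset.Icc 1 N, g j := by
      rw [hins, Finset.prod_insert hnot, Finset.prod_insert hnot]; ring
    have h1 : ‖f (N+1) * ((∏ j ∈ Finset.Icc 1 N, f j) - ∏ j ∈ Finset.Icc 1 N, g j)‖
        ≤ C ^ N * ∑ j ∈ Finset.Icc 1 N, ‖f j - g j‖ := by
      rcases Nat.eq_zero_or_pos N with h0 | hpos
      · subst h0; simp
      rw [norm_mul]
      have hfN : ‖f (N+1)‖ ≤ C := hf (N+1) (by simp)
      have hCN : C * C ^ (N - 1) = C ^ N := by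
        rw [← pow_succ']; congr 1; omega
      calc ‖f (N+1)‖ * ‖(∏ j ∈ Finset.Icc 1 N, f j) - ∏ j ∈ Finset.Icc 1 N, g j‖
          ≤ C * (C ^ (N - 1) * ∑ j ∈ Finset.Icc 1 N, ‖f j - g j‖) :=
            mul_le_mul hfN ihN (norm_nonneg _) hC0
        _ = C ^ N * ∑ j ∈ Finset.Icc 1 N, ‖f j - g j‖ := by rw [← mul_assoc, hCN]
    have h2 : ‖(f (N+1) - g (N+1)) * ∏ j ∈ Finset.Icc 1 N, g j‖
        ≤ C ^ N * ‖f (N+1) - g (N+1)‖ := by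
      rw [norm_mul, mul_comm]
      apply mul_le_mul_of_nonneg_right _ (norm_nonneg _)
      calc ‖∏ j ∈ Finset.Icc 1 N, g j‖ = ∏ j ∈ Finset.Icc 1 N, ‖g j‖ :=
            norm_prod (Finset.Icc 1 N) g
        _ ≤ ∏ j ∈ Finset.Icc 1 N, C := Finset.prod_le_prod (fun _ _ => norm_nonneg _) hg'
        _ = C ^ N := by rw [Finset.prod_const, Nat.card_Icc]; norm_num
    rw [key]
    refine le_trans (norm_add_le _ _) ?_
    refine le_trans (add_le_add h1 h2) ?_
    rw [hins, Finset.sum_insert hnot]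
    simp only [Nat.add_sub_cancel]
    ring_nf
    rfl

/-- Splitting the products at index `m`: if the first `m` zeros are `ε`-close and the remaining
ones have modulus at least `R`, then for `|z| ≤ 1` the difference of the two products
`∏ (1 − z/zⱼ)` is bounded by `(1+γ⁻¹)^{max(M,M̃)−1} (m γ⁻² ε + (M−m + M̃−m)/R)`. -/
theorem split_product_difference_bound (γ ε R : ℝ) (hγ : γ ∈ Set.Ioc (0 : ℝ) 1)
    (hR : 1 ≤ R) (hε : 0 < ε) (m M M' : ℕ) (hmM : m ≤ M) (hmM' : m ≤ M')
    (z z' : ℕ → ℂ)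
    (hz0 : ∀ j ∈ Finset.Icc 1 M, z j ≠ 0)
    (hz'0 : ∀ j ∈ Finset.Icc 1 M', z' j ≠ 0)
    (hzγ : ∀ j ∈ Finset.Icc 1 M, γ ≤ ‖z j‖)
    (hz'γ : ∀ j ∈ Finset.Icc 1 M', γ ≤ ‖z' j‖)
    (hclose : ∀ j ∈ Finset.Icc 1 m, ‖z j - z' j‖ ≤ ε)
    (hzR : ∀ j, m < j → j ≤ M → R ≤ ‖z j‖)
    (hz'R : ∀ j, m < j → j ≤ M' → R ≤ ‖z' j‖) :
    ∀ u : ℂ, ‖u‖ ≤ 1 →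
      ‖(∏ j ∈ Finset.Icc 1 M, (1 - u / z j)) - ∏ j ∈ Finset.Icc 1 M', (1 - u / z' j)‖
        ≤ (1 + γ⁻¹) ^ (max M M' - 1)
            * (m * γ⁻¹ ^ 2 * ε + (((M - m : ℕ) : ℝ) + ((M' - m : ℕ) : ℝ)) / R) := by
  obtain ⟨hγ0, hγ1⟩ := hγ
  intro u hu
  have hR0 : (0:ℝ) < R := lt_of_lt_of_le one_pos hR
  have hγinv : 1 ≤ γ⁻¹ := (one_le_inv₀ hγ0).mpr hγ1
  set C : ℝ := 1 + γ⁻¹ with hCdef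
  have hC : 1 ≤ C := by simp [hCdef]; linarith
  have hC0 : (0:ℝ) ≤ C := le_trans zero_le_one hC
  set N := max M M' with hNdef
  have hMN : M ≤ N := le_max_left _ _
  have hM'N : M' ≤ N := le_max_right _ _
  set F : ℕ → ℂ := fun j => if j ≤ M then 1 - u / z j else 1 with hFdef
  set G : ℕ → ℂ := fun j => if j ≤ M' then 1 - u / z' j else 1 with hGdef
  -- rewrite the products
  have hFP : ∏ j ∈ Finset.Icc 1 M, (1 - u / z j) = ∏ j ∈ Finset.Icc 1 N, F j := by
    rw [← Finset.prod_subset (Finset.Icc_subset_Icc_right hMN)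
      (fun x hx hnx => by
        simp only [Finset.mem_Icc] at hx hnx
        simp only [hFdef]
        rw [if_neg (by omega)])]
    exact Finset.prod_congr rfl fun j hj => by
      simp only [hFdef]; rw [if_pos (Finset.mem_Icc.mp hj).2]
  have hGP : ∏ j ∈ Finset.Icc 1 M', (1 - u / z' j) = ∏ j ∈ Finset.Icc 1 N, G j := by
    rw [← Finset.prod_subset (Finset.Icc_subset_Icc_right hM'N)
      (fun x hx hnx => by
        simp only [Finset.mem_Icc] at hx hnx
        simp only [hGdef]
        rw [if_neg (by omega)])]
    exact Finset.prod_congr rfl fun j hj => by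
      simp only [hGdef]; rw [if_pos (Finset.mem_Icc.mp hj).2]
  -- norm bounds for the factors
  have hdivb : ∀ (w : ℂ), γ ≤ ‖w‖ → ‖1 - u / w‖ ≤ C := by
    intro w hw
    refine le_trans (norm_sub_le _ _) ?_
    rw [norm_one, norm_div, hCdef]
    gcongr
    calc ‖u‖ / ‖w‖ ≤ 1 / γ := by
          apply div_le_div₀ zero_le_one hu hγ0 hw
      _ = γ⁻¹ := one_div γ
  have hFb : ∀ j ∈ Finset.Icc 1 N, ‖F j‖ ≤ C := by
    intro j hj
    simp only [hFdef]
    by_cases hjM : j ≤ M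
    · rw [if_pos hjM]
      exact hdivb _ (hzγ j (Finset.mem_Icc.mpr ⟨(Finset.mem_Icc.mp hj).1, hjM⟩))
    · rw [if_neg hjM, norm_one]; exact hC
  have hGb : ∀ j ∈ Finset.Icc 1 N, ‖G j‖ ≤ C := by
    intro j hj
    simp only [hGdef]
    by_cases hjM : j ≤ M'
    · rw [if_pos hjM]
      exact hdivb _ (hz'γ j (Finset.mem_Icc.mpr ⟨(Finset.mem_Icc.mp hj).1, hjM⟩))
    · rw [if_neg hjM, norm_one]; exact hC
  -- the sum bound
  have hmN : m ≤ N := le_trans hmM hMN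
  have hsplit : Finset.Icc 1 N = Finset.Icc 1 m ∪ Finset.Ioc m N := by
    ext j; simp [Finset.mem_Icc, Finset.mem_Ioc]; omega
  have hdisj : Disjoint (Finset.Icc 1 m) (Finset.Ioc m N) := by
    rw [Finset.disjoint_left]
    intro j hj hj'
    simp [Finset.mem_Icc] at hj
    simp [Finset.mem_Ioc] at hj'
    omega
  -- part A
  have hA : ∑ j ∈ Finset.Icc 1 m, ‖F j - G j‖ ≤ m * (γ⁻¹ ^ 2 * ε) := by
    have hb : ∀ j ∈ Finset.Icc 1 m, ‖F j - G j‖ ≤ γ⁻¹ ^ 2 * ε := by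
      intro j hj
      obtain ⟨hj1, hjm⟩ := Finset.mem_Icc.mp hj
      have hjM : j ∈ Finset.Icc 1 M := Finset.mem_Icc.mpr ⟨hj1, le_trans hjm hmM⟩
      have hjM' : j ∈ Finset.Icc 1 M' := Finset.mem_Icc.mpr ⟨hj1, le_trans hjm hmM'⟩
      have hne := hz0 j hjM
      have hne' := hz'0 j hjM'
      have heq : F j - G j = u * (z j - z' j) / (z j * z' j) := by
        simp only [hFdef, hGdef]
        rw [if_pos (le_trans hjm hmM), if_pos (le_trans hjm hmM')]
        field_simp
        ring
      rw [heq, norm_div, norm_mul, norm_mul]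
      calc ‖u‖ * ‖z j - z' j‖ / (‖z j‖ * ‖z' j‖) ≤ 1 * ε / (γ * γ) := by
            apply div_le_div₀ (by positivity)
              (mul_le_mul hu (hclose j hj) (norm_nonneg _) zero_le_one)
              (by positivity)
              (mul_le_mul (hzγ j hjM) (hz'γ j hjM') (le_of_lt hγ0) (norm_nonneg _))
        _ = γ⁻¹ ^ 2 * ε := by rw [one_mul, sq]; field_simp
    calc ∑ j ∈ Finset.Icc 1 m, ‖F j - G j‖ ≤ (Finset.Icc 1 m).card • (γ⁻¹ ^ 2 * ε) :=
          Finset.sum_le_card_nsmul _ _ _ hb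
      _ = m * (γ⁻¹ ^ 2 * ε) := by rw [Nat.card_Icc, nsmul_eq_mul]; norm_num
  -- part B
  have hBF : ∑ j ∈ Finset.Ioc m N, ‖F j - 1‖ ≤ ((M - m : ℕ) : ℝ) * R⁻¹ := by
    have heq : ∑ j ∈ Finset.Ioc m N, ‖F j - 1‖ = ∑ j ∈ Finset.Ioc m M, ‖F j - 1‖ := by
      refine (Finset.sum_subset (Finset.Ioc_subset_Ioc_right hMN) ?_).symm
      intro x hx hnx
      simp only [Finset.mem_Ioc] at hx hnx
      simp only [hFdef]
      rw [if_neg (by omega)]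
      simp
    rw [heq]
    have hb : ∀ j ∈ Finset.Ioc m M, ‖F j - 1‖ ≤ R⁻¹ := by
      intro j hj
      obtain ⟨hjm, hjM⟩ := Finset.mem_Ioc.mp hj
      simp only [hFdef]
      rw [if_pos hjM]
      have hRz := hzR j hjm hjM
      have hzpos : (0:ℝ) < ‖z j‖ := lt_of_lt_of_le hR0 hRz
      calc ‖1 - u / z j - 1‖ = ‖u‖ / ‖z j‖ := by
            rw [show (1 : ℂ) - u / z j - 1 = -(u / z j) by ring, norm_neg, norm_div]
        _ ≤ 1 / R := div_le_div₀ zero_le_one hu hR0 hRz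
        _ = R⁻¹ := one_div R
    calc ∑ j ∈ Finset.Ioc m M, ‖F j - 1‖ ≤ (Finset.Ioc m M).card • R⁻¹ :=
          Finset.sum_le_card_nsmul _ _ _ hb
      _ = ((M - m : ℕ) : ℝ) * R⁻¹ := by rw [Nat.card_Ioc, nsmul_eq_mul]
  have hBG : ∑ j ∈ Finset.Ioc m N, ‖G j - 1‖ ≤ ((M' - m : ℕ) : ℝ) * R⁻¹ := by
    have heq : ∑ j ∈ Finset.Ioc m N, ‖G j - 1‖ = ∑ j ∈ Finset.Ioc m M', ‖G j - 1‖ := by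
      refine (Finset.sum_subset (Finset.Ioc_subset_Ioc_right hM'N) ?_).symm
      intro x hx hnx
      simp only [Finset.mem_Ioc] at hx hnx
      simp only [hGdef]
      rw [if_neg (by omega)]
      simp
    rw [heq]
    have hb : ∀ j ∈ Finset.Ioc m M', ‖G j - 1‖ ≤ R⁻¹ := by
      intro j hj
      obtain ⟨hjm, hjM⟩ := Finset.mem_Ioc.mp hj
      simp only [hGdef]
      rw [if_pos hjM]
      have hRz := hz'R j hjm hjM
      calc ‖1 - u / z' j - 1‖ = ‖u‖ / ‖z' j‖ := by
            rw [show (1 : ℂ) - u / z' j - 1 = -(u / z' j) by ring, norm_neg, norm_div]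
        _ ≤ 1 / R := div_le_div₀ zero_le_one hu hR0 hRz
        _ = R⁻¹ := one_div R
    calc ∑ j ∈ Finset.Ioc m M', ‖G j - 1‖ ≤ (Finset.Ioc m M').card • R⁻¹ :=
          Finset.sum_le_card_nsmul _ _ _ hb
      _ = ((M' - m : ℕ) : ℝ) * R⁻¹ := by rw [Nat.card_Ioc, nsmul_eq_mul]
  have hB : ∑ j ∈ Finset.Ioc m N, ‖F j - G j‖
      ≤ ((M - m : ℕ) : ℝ) * R⁻¹ + ((M' - m : ℕ) : ℝ) * R⁻¹ := by
    refine le_trans (Finset.sum_le_sum (g := fun j => ‖F j - 1‖ + ‖G j - 1‖) ?_) ?_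
    · intro j hj
      calc ‖F j - G j‖ = ‖(F j - 1) - (G j - 1)‖ := by ring_nf
        _ ≤ ‖F j - 1‖ + ‖G j - 1‖ := norm_sub_le _ _
    · rw [Finset.sum_add_distrib]
      exact add_le_add hBF hBG
  have hS : ∑ j ∈ Finset.Icc 1 N, ‖F j - G j‖
      ≤ m * γ⁻¹ ^ 2 * ε + (((M - m : ℕ) : ℝ) + ((M' - m : ℕ) : ℝ)) / R := by
    rw [hsplit, Finset.sum_union hdisj]
    have : (m : ℝ) * γ⁻¹ ^ 2 * ε + (((M - m : ℕ) : ℝ) + ((M' - m : ℕ) : ℝ)) / R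
        = m * (γ⁻¹ ^ 2 * ε) + (((M - m : ℕ) : ℝ) * R⁻¹ + ((M' - m : ℕ) : ℝ) * R⁻¹) := by
      rw [div_eq_mul_inv]; ring
    rw [this]
    exact add_le_add hA hB
  rw [hFP, hGP]
  calc ‖(∏ j ∈ Finset.Icc 1 N, F j) - ∏ j ∈ Finset.Icc 1 N, G j‖
      ≤ C ^ (N - 1) * ∑ j ∈ Finset.Icc 1 N, ‖F j - G j‖ :=
        prod_diff_bound C hC F G N hFb hGb
    _ ≤ C ^ (N - 1) * (m * γ⁻¹ ^ 2 * ε + (((M - m : ℕ) : ℝ) + ((M' - m : ℕ) : ℝ)) / R) :=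
        mul_le_mul_of_nonneg_left hS (pow_nonneg hC0 _)
end
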